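/- arXiv:2605.03921 — 5 statements merged into one kernel-verified Lean document; each statement's English description precedes it below -/
import Mathlib

section
/- Let (u_t)_{t≥1} be a sequence with values in (0,1) and define U_t = ∑_{l=1}^t u_l. Then for any T ≥ 1, ∑_{t=1}^T u_{t+1} / max(U_t, 1) ≤ 4 · log(U_{T+1} + 1). -/
/-! Since `U_t + 1 ≤ 2 max(U_t, 1)`, each term is at most `2x` with `x = u_{t+1}/(U_t + 1) ≤ 1`,
and `2x ≤ 4 log(1 + x) = 4 (log(U_{t+1} + 1) - log(U_t + 1))`; the right-hand sides telescope. -/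

open Real Finset

lemma le_two_mul_log_one_add {x : ℝ} (hx0 : 0 ≤ x) (hx2 : x ≤ 2) : x ≤ 2 * log (1 + x) := by
  have hlog := le_log_one_add_of_nonneg hx0
  have : x ≤ 2 * (2 * x / (x + 2)) := by
    rw [← mul_div_assoc, le_div_iff₀ (by linarith)]
    nlinarith
  linarith

lemma div_max_one_le_four_mul_log_sub {a b : ℝ} (ha : 0 ≤ a) (hb0 : 0 ≤ b) (hb2 : b ≤ 2) :
    b / max a 1 ≤ 4 * (log (a + b + 1) - log (a + 1)) := by
  have ha1 : 0 < a + 1 := by linarith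
  have hmax : a + 1 ≤ 2 * max a 1 := by linarith [le_max_left a 1, le_max_right a 1]
  have hdiv : b / max a 1 ≤ 2 * (b / (a + 1)) :=
    calc b / max a 1 ≤ b / ((a + 1) / 2) :=
          div_le_div_of_nonneg_left hb0 (by positivity) (by linarith)
      _ = 2 * (b / (a + 1)) := by field_simp
  have hlog_sub : log (a + b + 1) - log (a + 1) = log (1 + b / (a + 1)) := by
    rw [← log_div (by linarith) ha1.ne']
    congr 1
    field_simp
    ring
  have hx2 : b / (a + 1) ≤ 2 := by
    rw [div_le_iff₀ ha1]
    linarith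
  rw [hlog_sub]
  linarith [le_two_mul_log_one_add (by positivity) hx2]

theorem stmt3_general (u : ℕ → ℝ) (hu : ∀ t, 1 ≤ t → u t ∈ Set.Ioo (0:ℝ) 1)
    (T : ℕ) :
    ∑ t ∈ Finset.Icc 1 T, u (t + 1) / max (∑ l ∈ Finset.Icc 1 t, u l) 1
      ≤ 4 * Real.log ((∑ l ∈ Finset.Icc 1 (T + 1), u l) + 1) := by
  set U : ℕ → ℝ := fun t => ∑ l ∈ Icc 1 t, u l
  have hU_nonneg : ∀ t, 0 ≤ U t := fun t =>
    sum_nonneg fun l hl => (hu l (mem_Icc.mp hl).1).1.le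
  have hU_succ : ∀ t, U (t + 1) = U t + u (t + 1) := fun t => sum_Icc_succ_top (by omega) u
  calc ∑ t ∈ Icc 1 T, u (t + 1) / max (U t) 1
      ≤ ∑ t ∈ Icc 1 T, 4 * (log (U (t + 1) + 1) - log (U t + 1)) := by
        refine sum_le_sum fun t _ => ?_
        obtain ⟨hpos, hlt⟩ := hu (t + 1) (by omega)
        rw [hU_succ]
        exact div_max_one_le_four_mul_log_sub (hU_nonneg t) hpos.le (by linarith)
    _ = 4 * (log (U (T + 1) + 1) - log (U 1 + 1)) := by
        rw [← mul_sum, ← Ico_add_one_right_eq_Icc,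
          sum_Ico_sub (fun t => log (U t + 1)) (by omega)]
    _ ≤ 4 * log (U (T + 1) + 1) := by
        linarith [log_nonneg (by linarith [hU_nonneg 1] : (1 : ℝ) ≤ U 1 + 1)]

/-- Elliptic potential lemma: for a sequence `(u_t)` with values in `(0,1)` and
`U_t = ∑_{l=1}^t u_l`, one has `∑_{t=1}^T u_{t+1}/max(U_t,1) ≤ 4 log(U_{T+1}+1)`. -/
theorem stmt3 (u : ℕ → ℝ) (hu : ∀ t, 1 ≤ t → u t ∈ Set.Ioo (0:ℝ) 1)
    (T : ℕ) (hT : 1 ≤ T) :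
    ∑ t ∈ Finset.Icc 1 T, u (t + 1) / max (∑ l ∈ Finset.Icc 1 t, u l) 1
      ≤ 4 * Real.log ((∑ l ∈ Finset.Icc 1 (T + 1), u l) + 1) :=
  stmt3_general u hu T
end

section
/- Let q be a probability vector in the simplex Δ of ℝ^d, let n ≥ 1, and let ζ = 1/n. Then ∫_Δ exp(-n · KL(q ‖ x)) dx ≥ ζ^{d-1} · ∫_Δ exp(-n(1-ζ)·KL(q ‖ q) - nζ·KL(q ‖ x)) dx = n^{-(d-1)} · ∫_Δ exp(-KL(q ‖ x)) dx, by the change of variables x ↦ (1-ζ)q + ζx and convexity of x ↦ KL(q ‖ x). -/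
/-! With `c = 1/n`, the homothety `T x = (1 - c) q + c x` maps the simplex into itself and
multiplies its `(d-1)`-dimensional Hausdorff measure by `c^(d-1)`. Convexity of `KL(q‖·)`
together with `KL(q‖q) = 0` gives `n KL(q‖T x) ≤ KL(q‖x)` at every `x` with positive
coordinates, i.e. almost everywhere on the simplex, whose faces have Hausdorff dimension `d - 2`.
Integrating and substituting `y = T x` yields the inequality; the equality is `KL(q‖q) = 0`. -/

open MeasureTheory Real

/-- KL divergence between two points of the simplex of `ℝ^d`. -/
noncomputable def KLvec {d : ℕ} (q x : EuclideanSpace ℝ (Fin d)) : ℝ :=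
  ∑ i, q i * Real.log (q i / x i)

/-- The probability simplex of `ℝ^d`. -/
def simplexSet (d : ℕ) : Set (EuclideanSpace ℝ (Fin d)) :=
  {x | (∀ i, 0 ≤ x i) ∧ ∑ i, x i = 1}

open Set Module
open scoped NNReal ENNReal

lemma hausdorffMeasure_eq_zero_of_finrank_vectorSpan_lt {E : Type*} [NormedAddCommGroup E]
    [NormedSpace ℝ E] [FiniteDimensional ℝ E] [MeasurableSpace E] [BorelSpace E] {s : Set E}
    (hs : Convex ℝ s) {n : ℕ} (h : finrank ℝ (vectorSpan ℝ s) < n) : μH[(n : ℝ)] s = 0 := by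
  rcases s.eq_empty_or_nonempty with rfl | hne
  · exact measure_empty
  rw [← NNReal.coe_natCast]
  refine hausdorffMeasure_of_dimH_lt ?_
  rw [hs.dimH_eq_finrank_vectorSpan hne]
  exact_mod_cast h

lemma setLIntegral_comp_homothety {𝕜 E P : Type*} [NormedField 𝕜] [NormedAddCommGroup E]
    [NormedSpace 𝕜 E] [MetricSpace P] [NormedAddTorsor E P] [MeasurableSpace P] [BorelSpace P]
    {s : ℝ} (hs : 0 ≤ s) (x : P) {c : 𝕜} (hc : c ≠ 0) {f : P → ℝ≥0∞} (hf : Measurable f)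
    {t : Set P} (ht : MeasurableSet t) :
    ∫⁻ y in AffineMap.homothety x c ⁻¹' t, f (AffineMap.homothety x c y) ∂μH[s]
      = (‖c‖₊⁻¹ ^ s : ℝ≥0) * ∫⁻ y in t, f y ∂μH[s] := by
  rw [← setLIntegral_map ht hf (AffineMap.homothety_continuous x c).measurable,
    map_homothety_hausdorffMeasure hs x hc, Measure.restrict_smul, lintegral_smul_measure,
    ENNReal.smul_def, smul_eq_mul]

section Simplex

variable {d : ℕ}

lemma simplexSet_zero : simplexSet 0 = ∅ :=
  eq_empty_of_forall_notMem fun _ hx => by simpa using hx.2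

lemma convex_simplexSet : Convex ℝ (simplexSet d) :=
  (convex_stdSimplex ℝ (Fin d)).linear_preimage (WithLp.linearEquiv 2 ℝ (Fin d → ℝ)).toLinearMap

lemma measurableSet_simplexSet : MeasurableSet (simplexSet d) :=
  ((isClosed_stdSimplex ℝ (Fin d)).preimage (PiLp.continuous_ofLp 2 _)).measurableSet

lemma single_mem_simplexSet (i : Fin d) : EuclideanSpace.single i (1 : ℝ) ∈ simplexSet d := by
  change WithLp.ofLp _ ∈ stdSimplex ℝ (Fin d)
  simpa using single_mem_stdSimplex ℝ i

lemma finrank_vectorSpan_simplexSet_le : finrank ℝ (vectorSpan ℝ (simplexSet (d + 1))) ≤ d := by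
  let S : EuclideanSpace ℝ (Fin (d + 1)) →ₗ[ℝ] ℝ := ∑ j, (EuclideanSpace.proj j).toLinearMap
  have hS : ∀ x, S x = ∑ j, x j := fun x => by simp [S]
  have hspan : vectorSpan ℝ (simplexSet (d + 1)) ≤ LinearMap.ker S := by
    rw [vectorSpan_def, Submodule.span_le]
    rintro _ ⟨x, hx, y, hy, rfl⟩
    simp [hS, Finset.sum_sub_distrib, hx.2, hy.2]
  have hker : LinearMap.ker S ≠ ⊤ := fun h => by
    have h0 : EuclideanSpace.single (0 : Fin (d + 1)) (1 : ℝ) ∈ LinearMap.ker S := h ▸ trivial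
    rw [LinearMap.mem_ker, hS, (single_mem_simplexSet 0).2] at h0
    exact one_ne_zero h0
  have := (Submodule.finrank_mono hspan).trans_lt (Submodule.finrank_lt hker)
  rw [finrank_euclideanSpace_fin] at this
  omega

lemma hausdorffMeasure_face_simplexSet_eq_zero (i : Fin (d + 1)) :
    μH[(d : ℝ)] (simplexSet (d + 1) ∩ {x | x i = 0}) = 0 := by
  rcases (simplexSet (d + 1) ∩ {x | x i = 0}).eq_empty_or_nonempty
    with h | ⟨x, hxΔ, hxi : x i = 0⟩
  · rw [h, measure_empty]
  have hface : vectorSpan ℝ (simplexSet (d + 1) ∩ {x | x i = 0})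
      ≤ LinearMap.ker (EuclideanSpace.proj (𝕜 := ℝ) i).toLinearMap := by
    rw [vectorSpan_def, Submodule.span_le]
    rintro _ ⟨y, ⟨-, hy : y i = 0⟩, z, ⟨-, hz : z i = 0⟩, rfl⟩
    simp [hy, hz]
  -- `e_i - x` lies in the direction of the simplex but not in that of the face
  have hlt : vectorSpan ℝ (simplexSet (d + 1) ∩ {x | x i = 0})
      < vectorSpan ℝ (simplexSet (d + 1)) := by
    refine SetLike.lt_iff_le_and_exists.2 ⟨vectorSpan_mono ℝ inter_subset_left,
      _, vsub_mem_vectorSpan ℝ (single_mem_simplexSet i) hxΔ, fun h => ?_⟩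
    simpa [hxi] using hface h
  refine hausdorffMeasure_eq_zero_of_finrank_vectorSpan_lt
    (convex_simplexSet.inter (convex_hyperplane (EuclideanSpace.proj (𝕜 := ℝ) i).isLinear 0)) ?_
  exact (Submodule.finrank_lt_finrank_of_lt hlt).trans_le finrank_vectorSpan_simplexSet_le

lemma ae_pos_of_mem_simplexSet :
    ∀ᵐ x ∂μH[(d : ℝ)], x ∈ simplexSet (d + 1) → ∀ i, 0 < x i := by
  have hnull := measure_iUnion_null (hausdorffMeasure_face_simplexSet_eq_zero (d := d))
  filter_upwards [measure_eq_zero_iff_ae_notMem.1 hnull] with x hx hxΔ i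
  exact (hxΔ.1 i).lt_of_ne fun h => hx (mem_iUnion.2 ⟨i, hxΔ, h.symm⟩)

/-- The chart `y ↦ (y, 1 - ∑ y)` of the affine hull of the simplex. -/
noncomputable def simplexChart (d : ℕ) : (Fin d → ℝ) →ᵃ[ℝ] EuclideanSpace ℝ (Fin (d + 1)) :=
  ((WithLp.linearEquiv 2 ℝ (Fin (d + 1) → ℝ)).symm.toLinearMap ∘ₗ
      LinearMap.pi (Fin.lastCases (-∑ l, LinearMap.proj l) LinearMap.proj)).toAffineMap +
    AffineMap.const ℝ _ (EuclideanSpace.single (Fin.last d) 1)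

lemma simplexChart_apply (y : Fin d → ℝ) (j : Fin (d + 1)) :
    simplexChart d y j = Fin.lastCases (1 - ∑ l, y l) y j := by
  induction j using Fin.lastCases <;> simp [simplexChart, sub_eq_neg_add]

lemma simplexSet_subset_image_simplexChart :
    simplexSet (d + 1) ⊆ simplexChart d '' Icc 0 1 := by
  intro x hx
  refine ⟨fun l => x (Fin.castSucc l),
    ⟨fun l => hx.1 _, fun l => (mem_Icc_of_mem_stdSimplex hx _).2⟩, ?_⟩
  ext j
  induction j using Fin.lastCases with
  | last =>
    rw [simplexChart_apply, Fin.lastCases_last, ← hx.2, Fin.sum_univ_castSucc]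
    ring
  | cast l => rw [simplexChart_apply, Fin.lastCases_castSucc]

lemma hausdorffMeasure_simplexSet_lt_top : μH[(d : ℝ)] (simplexSet (d + 1)) < ∞ := by
  obtain ⟨K, hK⟩ := (simplexChart d).lipschitzWith_of_finiteDimensional
  have hcube : (μH[(d : ℝ)] : Measure (Fin d → ℝ)) (Icc 0 1) < ∞ := by
    have hvol : (μH[(d : ℝ)] : Measure (Fin d → ℝ)) = volume := by
      simpa using hausdorffMeasure_pi_real (ι := Fin d)
    exact hvol ▸ isCompact_Icc.measure_lt_top
  calc μH[(d : ℝ)] (simplexSet (d + 1))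
      ≤ μH[(d : ℝ)] (simplexChart d '' Icc 0 1) :=
        measure_mono simplexSet_subset_image_simplexChart
    _ ≤ K ^ (d : ℝ) * μH[(d : ℝ)] (Icc (0 : Fin d → ℝ) 1) :=
        hK.hausdorffMeasure_image_le d.cast_nonneg _
    _ < ∞ := ENNReal.mul_lt_top (by simp) hcube

end Simplex

section KL

variable {d : ℕ}

lemma KLvec_self (q : EuclideanSpace ℝ (Fin d)) : KLvec q q = 0 :=
  Finset.sum_eq_zero fun i _ => by
    rcases eq_or_ne (q i) 0 with h | h <;> simp [h]

@[fun_prop]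
lemma measurable_KLvec (q : EuclideanSpace ℝ (Fin d)) : Measurable (KLvec q) := by
  unfold KLvec
  fun_prop

lemma sum_mul_log_le_KLvec {q x : EuclideanSpace ℝ (Fin d)} (hq : q ∈ simplexSet d)
    (hx : x ∈ simplexSet d) : ∑ i, q i * Real.log (q i) ≤ KLvec q x := by
  refine Finset.sum_le_sum fun i _ => ?_
  have hlog_q : Real.log (q i) ≤ 0 := Real.log_nonpos (hq.1 i) (mem_Icc_of_mem_stdSimplex hq i).2
  rcases (hq.1 i).eq_or_lt with hqi | hqi
  · simp [← hqi]
  rcases (hx.1 i).eq_or_lt with hxi | hxi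
  · -- `log (q i / 0) = log 0 = 0`
    simpa [← hxi] using mul_nonpos_of_nonneg_of_nonpos hqi.le hlog_q
  have hlog_x : Real.log (x i) ≤ 0 := Real.log_nonpos (hx.1 i) (mem_Icc_of_mem_stdSimplex hx i).2
  rw [Real.log_div hqi.ne' hxi.ne']
  nlinarith

lemma convexOn_KLvec {q : EuclideanSpace ℝ (Fin d)} (hq : ∀ i, 0 ≤ q i) :
    ConvexOn ℝ {x | ∀ i, 0 < q i → 0 < x i} (KLvec q) := by
  have hD : Convex ℝ {x : EuclideanSpace ℝ (Fin d) | ∀ i, 0 < q i → 0 < x i} := by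
    simp only [ofPred_forall]
    exact convex_iInter fun i => convex_iInter fun _ =>
      (convex_Ioi 0).linear_preimage (EuclideanSpace.proj (𝕜 := ℝ) i).toLinearMap
  have hterm (i : Fin d) : ConvexOn ℝ {x : EuclideanSpace ℝ (Fin d) | ∀ i, 0 < q i → 0 < x i}
      fun x => q i * Real.log (q i / x i) := by
    rcases (hq i).eq_or_lt with hqi | hqi
    · simpa [← hqi] using convexOn_const (0 : ℝ) hD
    have hlog : ConvexOn ℝ {x : EuclideanSpace ℝ (Fin d) | 0 < x i} fun x => -Real.log (x i) :=
      strictConcaveOn_log_Ioi.concaveOn.neg.comp_linearMap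
        (EuclideanSpace.proj (𝕜 := ℝ) i).toLinearMap
    refine ((hlog.smul hqi.le).add_const (q i * Real.log (q i))).subset
      (fun x (hx : ∀ j, 0 < q j → 0 < x j) => hx i hqi) hD |>.congr fun x hx => ?_
    rw [Pi.add_apply, smul_eq_mul, Real.log_div hqi.ne' (hx i hqi).ne']
    ring
  refine ⟨hD, fun x hx y hy a b ha hb hab => ?_⟩
  simp only [KLvec, Finset.smul_sum, ← Finset.sum_add_distrib]
  exact Finset.sum_le_sum fun i _ => (hterm i).2 hx hy ha hb hab

lemma KLvec_homothety_le {q x : EuclideanSpace ℝ (Fin d)} (hq : ∀ i, 0 ≤ q i)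
    (hx : ∀ i, 0 < q i → 0 < x i) {c : ℝ} (hc₀ : 0 ≤ c) (hc₁ : c ≤ 1) :
    KLvec q (AffineMap.homothety q c x) ≤ c * KLvec q x := by
  have h := (convexOn_KLvec hq).2 (fun _ => id) hx (sub_nonneg.2 hc₁) hc₀ (sub_add_cancel 1 c)
  rwa [KLvec_self, smul_zero, zero_add, smul_eq_mul, ← AffineMap.lineMap_apply_module,
    ← AffineMap.homothety_eq_lineMap] at h

end KL

section Main

variable {d : ℕ}

lemma lintegral_exp_neg_KLvec_le {q : EuclideanSpace ℝ (Fin (d + 1))}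
    (hq : q ∈ simplexSet (d + 1)) {n : ℝ} (hn : 1 ≤ n) :
    ∫⁻ x in simplexSet (d + 1), ENNReal.ofReal (exp (-KLvec q x)) ∂μH[(d : ℝ)]
      ≤ ENNReal.ofReal (n ^ d) *
        ∫⁻ x in simplexSet (d + 1), ENNReal.ofReal (exp (-(n * KLvec q x))) ∂μH[(d : ℝ)] := by
  have hn₀ : 0 < n := one_pos.trans_le hn
  set T := AffineMap.homothety q n⁻¹
  have hpointwise : ∀ᵐ x ∂μH[(d : ℝ)].restrict (simplexSet (d + 1)),
      ENNReal.ofReal (exp (-KLvec q x)) ≤ ENNReal.ofReal (exp (-(n * KLvec q (T x)))) := by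
    rw [ae_restrict_iff' measurableSet_simplexSet]
    filter_upwards [ae_pos_of_mem_simplexSet] with x hpos hx
    have hT := KLvec_homothety_le hq.1 (fun i _ => hpos hx i) (inv_nonneg.2 hn₀.le)
      (inv_le_one_of_one_le₀ hn)
    refine ENNReal.ofReal_le_ofReal (exp_le_exp.2 (neg_le_neg ?_))
    calc n * KLvec q (T x) ≤ n * (n⁻¹ * KLvec q x) := mul_le_mul_of_nonneg_left hT hn₀.le
      _ = KLvec q x := by field_simp
  have hmaps : simplexSet (d + 1) ⊆ T ⁻¹' simplexSet (d + 1) := fun x hx => by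
    simpa [T, AffineMap.homothety_eq_lineMap] using convex_simplexSet.lineMap_mem hq hx
      ⟨inv_nonneg.2 hn₀.le, inv_le_one_of_one_le₀ hn⟩
  have hscale : ((‖n⁻¹‖₊⁻¹ ^ (d : ℝ) : ℝ≥0) : ℝ≥0∞) = ENNReal.ofReal (n ^ d) := by
    rw [← ENNReal.ofReal_coe_nnreal]
    simp [abs_of_pos hn₀]
  calc ∫⁻ x in simplexSet (d + 1), ENNReal.ofReal (exp (-KLvec q x)) ∂μH[(d : ℝ)]
      ≤ ∫⁻ x in simplexSet (d + 1), ENNReal.ofReal (exp (-(n * KLvec q (T x)))) ∂μH[(d : ℝ)] :=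
        lintegral_mono_ae hpointwise
    _ ≤ ∫⁻ x in T ⁻¹' simplexSet (d + 1), ENNReal.ofReal (exp (-(n * KLvec q (T x))))
          ∂μH[(d : ℝ)] := lintegral_mono_set hmaps
    _ = _ := hscale ▸ setLIntegral_comp_homothety d.cast_nonneg q (inv_ne_zero hn₀.ne')
          (f := fun y => ENNReal.ofReal (exp (-(n * KLvec q y)))) (by fun_prop)
          measurableSet_simplexSet

lemma setLIntegral_exp_neg_mul_KLvec_ne_top {q : EuclideanSpace ℝ (Fin (d + 1))}
    (hq : q ∈ simplexSet (d + 1)) {n : ℝ} (hn : 0 ≤ n) :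
    ∫⁻ x in simplexSet (d + 1), ENNReal.ofReal (exp (-(n * KLvec q x))) ∂μH[(d : ℝ)] ≠ ∞ := by
  refine ne_of_lt ?_
  calc _ ≤ ∫⁻ _ in simplexSet (d + 1), ENNReal.ofReal (exp (-(n * ∑ i, q i * log (q i))))
          ∂μH[(d : ℝ)] :=
        setLIntegral_mono' measurableSet_simplexSet fun x hx => ENNReal.ofReal_le_ofReal <|
          exp_le_exp.2 <| neg_le_neg <| mul_le_mul_of_nonneg_left (sum_mul_log_le_KLvec hq hx) hn
    _ < ∞ := by
        rw [setLIntegral_const]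
        exact ENNReal.mul_lt_top ENNReal.ofReal_lt_top hausdorffMeasure_simplexSet_lt_top

lemma integral_exp_neg_KLvec_le {q : EuclideanSpace ℝ (Fin (d + 1))}
    (hq : q ∈ simplexSet (d + 1)) {n : ℝ} (hn : 1 ≤ n) :
    ∫ x in simplexSet (d + 1), exp (-KLvec q x) ∂μH[(d : ℝ)]
      ≤ n ^ d * ∫ x in simplexSet (d + 1), exp (-(n * KLvec q x)) ∂μH[(d : ℝ)] := by
  have hn₀ : 0 ≤ n := zero_le_one.trans hn
  rw [integral_eq_lintegral_of_nonneg_ae (.of_forall fun _ => (exp_pos _).le) (by fun_prop),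
    integral_eq_lintegral_of_nonneg_ae (.of_forall fun _ => (exp_pos _).le) (by fun_prop),
    ← ENNReal.toReal_ofReal (pow_nonneg hn₀ d), ← ENNReal.toReal_mul]
  exact ENNReal.toReal_mono
    (ENNReal.mul_ne_top ENNReal.ofReal_ne_top (setLIntegral_exp_neg_mul_KLvec_ne_top hq hn₀))
    (lintegral_exp_neg_KLvec_le hq hn)

end Main

theorem stmt5_general {d : ℕ} (q : EuclideanSpace ℝ (Fin d))
    (hq : q ∈ simplexSet d) (n : ℝ) (hn : 1 ≤ n) :
    ((1/n) ^ (d - 1) *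
        ∫ x in simplexSet d,
          Real.exp (-(n * (1 - 1/n) * KLvec q q) - n * (1/n) * KLvec q x)
          ∂(μH[(d : ℝ) - 1])
      ≤ ∫ x in simplexSet d, Real.exp (-(n * KLvec q x)) ∂(μH[(d : ℝ) - 1])) ∧
    ((1/n) ^ (d - 1) *
        ∫ x in simplexSet d,
          Real.exp (-(n * (1 - 1/n) * KLvec q q) - n * (1/n) * KLvec q x)
          ∂(μH[(d : ℝ) - 1])
      = n ^ (-((d : ℝ) - 1)) *
          ∫ x in simplexSet d, Real.exp (-(KLvec q x)) ∂(μH[(d : ℝ) - 1])) := by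
  have hn₀ : 0 < n := one_pos.trans_le hn
  have hintegrand (x : EuclideanSpace ℝ (Fin d)) :
      -(n * (1 - 1/n) * KLvec q q) - n * (1/n) * KLvec q x = -KLvec q x := by
    rw [KLvec_self, mul_one_div_cancel hn₀.ne']
    ring
  simp only [hintegrand]
  rcases d with _ | d
  · simp [simplexSet_zero]
  rw [Nat.add_sub_cancel, Nat.cast_succ, add_sub_cancel_right]
  refine ⟨?_, by rw [rpow_neg hn₀.le, rpow_natCast, one_div, inv_pow]⟩
  calc (1 / n) ^ d * ∫ x in simplexSet (d + 1), exp (-KLvec q x) ∂μH[(d : ℝ)]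
      ≤ (1 / n) ^ d * (n ^ d * ∫ x in simplexSet (d + 1), exp (-(n * KLvec q x)) ∂μH[(d : ℝ)]) :=
        mul_le_mul_of_nonneg_left (integral_exp_neg_KLvec_le hq hn) (by positivity)
    _ = ∫ x in simplexSet (d + 1), exp (-(n * KLvec q x)) ∂μH[(d : ℝ)] := by
        rw [← mul_assoc, ← mul_pow, one_div_mul_cancel hn₀.ne', one_pow, one_mul]

/-- With `ζ = 1/n`, the change of variables `x ↦ (1-ζ)q + ζ x` and convexity of
`x ↦ KL(q‖x)` give
`∫_Δ e^{-n KL(q‖x)} dx ≥ ζ^{d-1} ∫_Δ e^{-n(1-ζ)KL(q‖q) - nζ KL(q‖x)} dx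
  = n^{-(d-1)} ∫_Δ e^{-KL(q‖x)} dx`. -/
theorem stmt5 {d : ℕ} (hd : 1 ≤ d) (q : EuclideanSpace ℝ (Fin d))
    (hq : q ∈ simplexSet d) (n : ℝ) (hn : 1 ≤ n) :
    ((1/n) ^ (d - 1) *
        ∫ x in simplexSet d,
          Real.exp (-(n * (1 - 1/n) * KLvec q q) - n * (1/n) * KLvec q x)
          ∂(μH[(d : ℝ) - 1])
      ≤ ∫ x in simplexSet d, Real.exp (-(n * KLvec q x)) ∂(μH[(d : ℝ) - 1])) ∧
    ((1/n) ^ (d - 1) *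
        ∫ x in simplexSet d,
          Real.exp (-(n * (1 - 1/n) * KLvec q q) - n * (1/n) * KLvec q x)
          ∂(μH[(d : ℝ) - 1])
      = n ^ (-((d : ℝ) - 1)) *
          ∫ x in simplexSet d, Real.exp (-(KLvec q x)) ∂(μH[(d : ℝ) - 1])) :=
  stmt5_general q hq n hn
end

section
/- For every real x with 0 ≤ x ≤ 1, the Gamma function satisfies Γ(1 + x) ≥ x^x (with the convention 0^0 = 1). -/
/-!
Since `2 = x (1 + x) + (1 - x) (2 + x)` and `Γ(2) = 1`, log-convexity of `Γ` on `(0, ∞)`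
together with `Γ(2 + x) = (1 + x) Γ(1 + x)` gives `log Γ(1 + x) ≥ (x - 1) log (1 + x)`.
The bounds `log x ≤ x - 1` and `log (1 + x) ≤ x` then show
`x log x ≤ x (x - 1) ≤ (x - 1) log (1 + x)` for `0 ≤ x ≤ 1`.
-/

open Real

lemma Real.mul_log_one_add_le_log_Gamma_one_add {x : ℝ} (hx0 : 0 ≤ x) (hx1 : x ≤ 1) :
    (x - 1) * log (1 + x) ≤ log (Gamma (1 + x)) := by
  have h1x : 0 < 1 + x := by linarith
  have hΓ : 0 < Gamma (1 + x) := Gamma_pos_of_pos h1x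
  have hconv := convexOn_log_Gamma.2 (Set.mem_Ioi.mpr h1x)
    (Set.mem_Ioi.mpr (by linarith : (0 : ℝ) < 2 + x)) hx0 (by linarith : 0 ≤ 1 - x) (by ring)
  have hΓ2 : Gamma (2 + x) = (1 + x) * Gamma (1 + x) := by
    rw [show (2 : ℝ) + x = 1 + x + 1 by ring, Gamma_add_one h1x.ne']
  simp only [smul_eq_mul, Function.comp_apply] at hconv
  rw [show x * (1 + x) + (1 - x) * (2 + x) = 2 by ring, Gamma_two, log_one, hΓ2,
    log_mul h1x.ne' hΓ.ne'] at hconv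
  linarith

lemma Real.mul_log_le_mul_log_one_add {x : ℝ} (hx0 : 0 ≤ x) (hx1 : x ≤ 1) :
    x * log x ≤ (x - 1) * log (1 + x) := by
  rcases hx0.eq_or_lt with rfl | hx
  · simp
  have hlog : log x ≤ x - 1 := log_le_sub_one_of_pos hx
  have hlog_one_add : log (1 + x) ≤ x := by
    linarith [log_le_sub_one_of_pos (by linarith : 0 < 1 + x)]
  calc x * log x ≤ x * (x - 1) := mul_le_mul_of_nonneg_left hlog hx0
    _ = (x - 1) * x := mul_comm _ _
    _ ≤ (x - 1) * log (1 + x) := mul_le_mul_of_nonpos_left hlog_one_add (by linarith)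

/-- For all real `0 ≤ x ≤ 1`, the Gamma function satisfies `Γ(1+x) ≥ x^x`
(with the real-power convention `0^0 = 1`). -/
theorem stmt7 (x : ℝ) (hx0 : 0 ≤ x) (hx1 : x ≤ 1) :
    x ^ x ≤ Real.Gamma (1 + x) := by
  rcases hx0.eq_or_lt with rfl | hx
  · simp
  calc x ^ x = exp (x * log x) := by rw [rpow_def_of_pos hx, mul_comm]
    _ ≤ exp (log (Gamma (1 + x))) :=
      exp_le_exp.mpr ((mul_log_le_mul_log_one_add hx0 hx1).trans
        (mul_log_one_add_le_log_Gamma_one_add hx0 hx1))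
    _ = Gamma (1 + x) := exp_log (Gamma_pos_of_pos (by linarith))
end

section
/- Let M be a finite-horizon MDP with a unique globally optimal deterministic policy π, and let Δ^π(M) > 0 be its minimal value gap, i.e., Δ^π(M) = min over (s,h) and a ≠ π_h(s) of [Q_h^π(s, π_h(s)) - Q_h^π(s, a)]. If M' is any MDP with ‖M - M'‖₁ ≤ δ and Δ^π(M) > 2(H+1)δ, then π is the unique globally optimal policy in M'. Equivalently: if the ℓ₁-ball of radius δ/(2(H+1)) around M is not contained in the set of MDPs where π is globally optimal, then Δ^π(M) ≤ δ. -/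
/-!
The Q-functions of `π` in `M` and `M'` satisfy the same backward recursion, so their difference
at stage `h` is the one-step model error, weighted by continuation values of size at most `H`,
plus a `p'`-average of the difference at stage `h + 1`. Unrolling gives
`|Q_h^π - Q'_h^π| ≤ H ‖M - M'‖₁ ≤ H δ`, so each gap of `π` in `M` shrinks by at most `2 H δ < Δ`
when passing to `M'`.
-/

open Finset

/-- State-action value function `Q_h^π(s,a)` of a deterministic Markov policy `π`. -/
noncomputable def Qval {S A : Type*} [Fintype S] (H : ℕ) (μ : S → A → ℕ → ℝ)
    (p : S → A → ℕ → S → ℝ) (π : ℕ → S → A) : ℕ → S → A → ℝ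
  | h, s, a =>
    if hh : H < h then 0
    else μ s a h + ∑ s' : S, p s a h s' * Qval H μ p π (h + 1) s' (π (h + 1) s')
  termination_by h _ _ => H + 1 - h
  decreasing_by simp_wf; omega

section

variable {S A : Type*} [Fintype S]

theorem abs_sum_mul_le_sum_abs_mul {u f : S → ℝ} {c : ℝ} (hf : ∀ s, |f s| ≤ c) :
    |∑ s, u s * f s| ≤ (∑ s, |u s|) * c := by
  rw [sum_mul]
  refine (abs_sum_le_sum_abs _ _).trans (sum_le_sum fun s _ => ?_)
  rw [abs_mul]
  exact mul_le_mul_of_nonneg_left (hf s) (abs_nonneg _)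

theorem abs_sum_mul_le_of_sum_eq_one {q f : S → ℝ} {c : ℝ} (hq : ∀ s, 0 ≤ q s)
    (hq1 : ∑ s, q s = 1) (hf : ∀ s, |f s| ≤ c) : |∑ s, q s * f s| ≤ c := by
  simpa [abs_of_nonneg (hq _), hq1] using abs_sum_mul_le_sum_abs_mul (u := q) hf

def IsStochastic (p : S → A → ℕ → S → ℝ) : Prop :=
  ∀ s a h, (∀ s', 0 ≤ p s a h s') ∧ ∑ s', p s a h s' = 1

variable {H h : ℕ} {μ μ' : S → A → ℕ → ℝ} {p p' : S → A → ℕ → S → ℝ} {π : ℕ → S → A}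

theorem Qval_of_lt (hh : H < h) (s : S) (a : A) : Qval H μ p π h s a = 0 := by
  rw [Qval, dif_pos hh]

theorem Qval_of_le (hh : h ≤ H) (s : S) (a : A) :
    Qval H μ p π h s a = μ s a h + ∑ s', p s a h s' * Qval H μ p π (h + 1) s' (π (h + 1) s') := by
  rw [Qval, dif_neg (not_lt.mpr hh)]

/-- The bound is a truncated subtraction: it vanishes past the horizon, where `Qval` does. -/
theorem abs_Qval_le (hμ : ∀ s a h, 1 ≤ h → h ≤ H → |μ s a h| ≤ 1) (hp : IsStochastic p)
    (h : ℕ) (hh : 1 ≤ h) (s : S) (a : A) : |Qval H μ p π h s a| ≤ (H + 1 - h : ℕ) := by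
  rcases lt_or_ge H h with hHh | hhH
  · simp [Qval_of_lt hHh]
  have hnext : ∀ s', |Qval H μ p π (h + 1) s' (π (h + 1) s')| ≤ (H + 1 - (h + 1) : ℕ) :=
    fun s' => abs_Qval_le hμ hp (h + 1) (by omega) s' _
  rw [Qval_of_le hhH, show H + 1 - h = 1 + (H + 1 - (h + 1)) by omega, Nat.cast_add, Nat.cast_one]
  exact (abs_add_le _ _).trans
    (add_le_add (hμ s a h hh hhH) (abs_sum_mul_le_of_sum_eq_one (hp s a h).1 (hp s a h).2 hnext))
termination_by H + 1 - h

theorem abs_Qval_sub_Qval_le (hμ : ∀ s a h, 1 ≤ h → h ≤ H → |μ s a h| ≤ 1)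
    (hp : IsStochastic p) (hp' : IsStochastic p') (ε : ℕ → ℝ)
    (hε : ∀ h s a, 1 ≤ h → h ≤ H →
      |μ s a h - μ' s a h| + ∑ s', |p s a h s' - p' s a h s'| ≤ ε h)
    (h : ℕ) (hh : 1 ≤ h) (s : S) (a : A) :
    |Qval H μ p π h s a - Qval H μ' p' π h s a| ≤ H * ∑ h' ∈ Icc h H, ε h' := by
  rcases lt_or_ge H h with hHh | hhH
  · simp [Qval_of_lt hHh, Icc_eq_empty_of_lt hHh]
  set Qn := fun s' => Qval H μ p π (h + 1) s' (π (h + 1) s')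
  set Qn' := fun s' => Qval H μ' p' π (h + 1) s' (π (h + 1) s')
  have hQn : ∀ s', |Qn s'| ≤ H := fun s' =>
    (abs_Qval_le hμ hp (h + 1) (by omega) s' _).trans (Nat.cast_le.mpr (by omega))
  have hrec : ∀ s', |Qn s' - Qn' s'| ≤ H * ∑ h' ∈ Icc (h + 1) H, ε h' := fun s' =>
    abs_Qval_sub_Qval_le hμ hp hp' ε hε (h + 1) (by omega) s' _
  have hsplit : (μ s a h + ∑ s', p s a h s' * Qn s') - (μ' s a h + ∑ s', p' s a h s' * Qn' s')
      = (μ s a h - μ' s a h) + ∑ s', (p s a h s' - p' s a h s') * Qn s'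
        + ∑ s', p' s a h s' * (Qn s' - Qn' s') := by
    simp only [sub_mul, mul_sub, sum_sub_distrib]
    ring
  have hlocal : |μ s a h - μ' s a h| + (∑ s', |p s a h s' - p' s a h s'|) * H ≤ H * ε h := by
    have hμH : |μ s a h - μ' s a h| ≤ H * |μ s a h - μ' s a h| :=
      le_mul_of_one_le_left (abs_nonneg _) (Nat.one_le_cast.mpr (hh.trans hhH))
    have hεH := mul_le_mul_of_nonneg_left (hε h s a hh hhH) (Nat.cast_nonneg (α := ℝ) H)
    linarith
  rw [Qval_of_le hhH, Qval_of_le hhH, hsplit, ← add_sum_Ioc_eq_sum_Icc hhH,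
    ← Icc_add_one_left_eq_Ioc, mul_add]
  calc _ ≤ |μ s a h - μ' s a h| + |∑ s', (p s a h s' - p' s a h s') * Qn s'|
        + |∑ s', p' s a h s' * (Qn s' - Qn' s')| := abs_add_three _ _ _
    _ ≤ |μ s a h - μ' s a h| + (∑ s', |p s a h s' - p' s a h s'|) * H
        + H * ∑ h' ∈ Icc (h + 1) H, ε h' := by
      gcongr
      · exact abs_sum_mul_le_sum_abs_mul hQn
      · exact abs_sum_mul_le_of_sum_eq_one (hp' s a h).1 (hp' s a h).2 hrec
    _ ≤ _ := by linarith
termination_by H + 1 - h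

variable [Fintype A]

noncomputable def stageDist (μ μ' : S → A → ℕ → ℝ) (p p' : S → A → ℕ → S → ℝ) (h : ℕ) : ℝ :=
  ∑ s, ∑ a, (|μ s a h - μ' s a h| + ∑ s', |p s a h s' - p' s a h s'|)

theorem stageDist_nonneg (h : ℕ) : 0 ≤ stageDist μ μ' p p' h :=
  sum_nonneg fun _ _ => sum_nonneg fun _ _ => by positivity

theorem le_stageDist (h : ℕ) (s : S) (a : A) :
    |μ s a h - μ' s a h| + ∑ s', |p s a h s' - p' s a h s'| ≤ stageDist μ μ' p p' h :=
  (single_le_sum (f := fun a => |μ s a h - μ' s a h| + ∑ s', |p s a h s' - p' s a h s'|)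
      (fun _ _ => by positivity) (mem_univ a)).trans
    (single_le_sum (f := fun s => ∑ a, (|μ s a h - μ' s a h| + ∑ s', |p s a h s' - p' s a h s'|))
      (fun _ _ => sum_nonneg fun _ _ => by positivity) (mem_univ s))

theorem sum_stageDist (t : Finset ℕ) :
    ∑ h ∈ t, stageDist μ μ' p p' h
      = ∑ s, ∑ a, ∑ h ∈ t, (|μ s a h - μ' s a h| + ∑ s', |p s a h s' - p' s a h s'|) := by
  simp only [stageDist]
  rw [sum_comm]
  exact sum_congr rfl fun _ _ => sum_comm

end

theorem stmt11_general {S A : Type*} [Fintype S] [Fintype A] (H : ℕ)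
    (μ μ' : S → A → ℕ → ℝ) (p p' : S → A → ℕ → S → ℝ)
    (hμ : ∀ s a h, 1 ≤ h → h ≤ H → μ s a h ∈ Set.Ioo (0:ℝ) 1)
    (hp : ∀ s a h, (∀ s', 0 ≤ p s a h s') ∧ ∑ s' : S, p s a h s' = 1)
    (hp' : ∀ s a h, (∀ s', 0 ≤ p' s a h s') ∧ ∑ s' : S, p' s a h s' = 1)
    (π : ℕ → S → A) (Δ δ : ℝ)
    (hgap : ∀ h s a, 1 ≤ h → h ≤ H → a ≠ π h s →
        Δ ≤ Qval H μ p π h s (π h s) - Qval H μ p π h s a)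
    (hΔ : 2 * ((H : ℝ) + 1) * δ < Δ)
    (hdist : ∑ s : S, ∑ a : A, ∑ h ∈ Finset.Icc 1 H,
        (|μ s a h - μ' s a h| + ∑ s' : S, |p s a h s' - p' s a h s'|) ≤ δ) :
    ∀ h s a, 1 ≤ h → h ≤ H → a ≠ π h s →
      Qval H μ' p' π h s a < Qval H μ' p' π h s (π h s) := by
  intro h s a hh hhH hne
  have hμ1 : ∀ s a h, 1 ≤ h → h ≤ H → |μ s a h| ≤ 1 := fun s a h h1 h2 =>
    (abs_of_pos (hμ s a h h1 h2).1).le.trans (hμ s a h h1 h2).2.le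
  set X := ∑ h' ∈ Icc h H, stageDist μ μ' p p' h'
  have hX0 : 0 ≤ X := sum_nonneg fun _ _ => stageDist_nonneg _
  have hXδ : X ≤ δ := by
    refine (sum_le_sum_of_subset_of_nonneg (Icc_subset_Icc_left hh)
      fun _ _ _ => stageDist_nonneg _).trans ?_
    rwa [sum_stageDist]
  have hQ : ∀ b, |Qval H μ p π h s b - Qval H μ' p' π h s b| ≤ H * X :=
    abs_Qval_sub_Qval_le hμ1 hp hp' _ (fun h s a _ _ => le_stageDist h s a) h hh s
  have hHX : (H : ℝ) * X ≤ (H + 1) * δ := by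
    linarith [mul_le_mul_of_nonneg_left hXδ (Nat.cast_nonneg (α := ℝ) H)]
  linarith [abs_le.mp (hQ a), abs_le.mp (hQ (π h s)), hgap h s a hh hhH hne]

/-- Gap robustness: if `π` is globally optimal in `M = (μ,p)` with minimal value gap
`Δ > 2(H+1)δ`, and `‖M - M'‖₁ ≤ δ`, then `π` is the unique (stage-wise strictly)
globally optimal policy in `M' = (μ',p')`. -/
theorem stmt11 {S A : Type*} [Fintype S] [Fintype A] (H : ℕ) (hH : 1 ≤ H)
    (μ μ' : S → A → ℕ → ℝ) (p p' : S → A → ℕ → S → ℝ)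
    (hμ : ∀ s a h, 1 ≤ h → h ≤ H → μ s a h ∈ Set.Ioo (0:ℝ) 1)
    (hμ' : ∀ s a h, 1 ≤ h → h ≤ H → μ' s a h ∈ Set.Ioo (0:ℝ) 1)
    (hp : ∀ s a h, (∀ s', 0 ≤ p s a h s') ∧ ∑ s' : S, p s a h s' = 1)
    (hp' : ∀ s a h, (∀ s', 0 ≤ p' s a h s') ∧ ∑ s' : S, p' s a h s' = 1)
    (π : ℕ → S → A) (Δ δ : ℝ) (hδ : 0 ≤ δ)
    (hgap : ∀ h s a, 1 ≤ h → h ≤ H → a ≠ π h s →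
        Δ ≤ Qval H μ p π h s (π h s) - Qval H μ p π h s a)
    (hΔ : 2 * ((H : ℝ) + 1) * δ < Δ)
    (hdist : ∑ s : S, ∑ a : A, ∑ h ∈ Finset.Icc 1 H,
        (|μ s a h - μ' s a h| + ∑ s' : S, |p s a h s' - p' s a h s'|) ≤ δ) :
    ∀ h s a, 1 ≤ h → h ≤ H → a ≠ π h s →
      Qval H μ' p' π h s a < Qval H μ' p' π h s (π h s) :=
  stmt11_general H μ μ' p p' hμ hp hp' π Δ δ hgap hΔ hdist
end

section
/- Let X₁, X₂, … be a sequence of Bernoulli random variables adapted to a filtration (H_t)_{t≥1} with P(X_i = 1 | H_{i-1}) = P_i. Then for any W > 0, P( ∃ n ≥ 1 : ∑_{t≤n} X_t ≤ (1/2)∑_{t≤n} P_t − W ) ≤ exp(−W). -/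
/-!
With `P t = μ[X t | ℱ (t - 1)]`, the process `M n = exp (∑_{t ≤ n} (P t / 2 - X t))` is a
nonnegative supermartingale with `M 0 = 1`: for a `{0,1}`-valued `X` the conditional Laplace
transform is `μ[exp (-X) | ℱ] = 1 - (1 - e⁻¹) P ≤ exp (-P / 2)`, because `1 - e⁻¹ ≥ 1 / 2`.
The event in the theorem lies in `{∃ n, M n ≥ e^W}`, which has probability at most `e^{-W}` by
Ville's maximal inequality, obtained from optional stopping at the first time `M` enters
`[e^W, ∞)` before a finite horizon.
-/

open MeasureTheory Finset Real

lemma exp_half_mul_one_sub_mul_le_one {p : ℝ} (hp : 0 ≤ p) :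
    exp (p / 2) * (1 - (1 - exp (-1)) * p) ≤ 1 := by
  have hc : 1 / 2 ≤ 1 - exp (-1) := by
    have : exp (-1) < 1 / 2 := by
      rw [exp_neg, inv_lt_comm₀ (exp_pos 1) (by norm_num)]
      simpa using exp_one_gt_two
    linarith
  calc exp (p / 2) * (1 - (1 - exp (-1)) * p)
      ≤ exp (p / 2) * exp (-((1 - exp (-1)) * p)) := by
        gcongr; linarith [add_one_le_exp (-((1 - exp (-1)) * p))]
    _ = exp (p / 2 - (1 - exp (-1)) * p) := by rw [← exp_add]; ring_nf
    _ ≤ 1 := exp_le_one_iff.2 (by nlinarith)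

lemma exp_neg_eq_one_sub_mul_of_eq_zero_or_eq_one {x : ℝ} (hx : x = 0 ∨ x = 1) :
    exp (-x) = 1 - (1 - exp (-1)) * x := by
  rcases hx with rfl | rfl <;> simp

section

variable {Ω : Type*} {m m0 : MeasurableSpace Ω} {μ : Measure Ω} [IsFiniteMeasure μ]
  {X : Ω → ℝ}

lemma integrable_exp_of_ae_le {f : Ω → ℝ} (hf : AEStronglyMeasurable f μ) {C : ℝ}
    (hC : ∀ᵐ ω ∂μ, f ω ≤ C) : Integrable (fun ω => exp (f ω)) μ :=
  .of_bound (continuous_exp.comp_aestronglyMeasurable hf) (exp C) <| by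
    filter_upwards [hC] with ω hω
    rw [norm_of_nonneg (exp_pos _).le]
    exact exp_le_exp.2 hω

lemma integrable_of_eq_zero_or_eq_one (hX : AEStronglyMeasurable X μ)
    (hval : ∀ ω, X ω = 0 ∨ X ω = 1) : Integrable X μ :=
  .of_bound hX 1 <| .of_forall fun ω => by rcases hval ω with h | h <;> simp [h]

lemma ae_condExp_mem_Icc_of_eq_zero_or_eq_one (hm : m ≤ m0) (hX : AEStronglyMeasurable X μ)
    (hval : ∀ ω, X ω = 0 ∨ X ω = 1) : ∀ᵐ ω ∂μ, μ[X|m] ω ∈ Set.Icc 0 1 := by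
  have hXint := integrable_of_eq_zero_or_eq_one hX hval
  have h0 : 0 ≤ᵐ[μ] μ[X|m] :=
    condExp_nonneg <| .of_forall fun ω => by rcases hval ω with h | h <;> simp [h]
  have h1 : μ[X|m] ≤ᵐ[μ] μ[fun _ => (1 : ℝ)|m] :=
    condExp_mono hXint (integrable_const 1) <| .of_forall fun ω => by
      rcases hval ω with h | h <;> simp [h]
  rw [condExp_const hm] at h1
  filter_upwards [h0, h1] with ω h0 h1 using ⟨h0, h1⟩

lemma condExp_exp_neg_of_eq_zero_or_eq_one (hm : m ≤ m0) (hX : AEStronglyMeasurable X μ)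
    (hval : ∀ ω, X ω = 0 ∨ X ω = 1) :
    μ[fun ω => exp (-X ω)|m] =ᵐ[μ] fun ω => 1 - (1 - exp (-1)) * μ[X|m] ω := by
  have hXint := integrable_of_eq_zero_or_eq_one hX hval
  have haffine : (fun ω => exp (-X ω)) = (fun _ => (1 : ℝ)) - (1 - exp (-1)) • X := by
    funext ω; exact exp_neg_eq_one_sub_mul_of_eq_zero_or_eq_one (hval ω)
  rw [haffine]
  filter_upwards [condExp_sub (integrable_const 1) (hXint.smul (1 - exp (-1))) m,
    condExp_smul (1 - exp (-1)) X m] with ω hsub hsmul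
  simp [hsub, hsmul, condExp_const hm]

lemma condExp_exp_half_condExp_sub_le_one (hm : m ≤ m0) (hX : StronglyMeasurable X)
    (hval : ∀ ω, X ω = 0 ∨ X ω = 1) :
    μ[fun ω => exp (μ[X|m] ω / 2 - X ω)|m] ≤ᵐ[μ] 1 := by
  set P := μ[X|m]
  have hP := ae_condExp_mem_Icc_of_eq_zero_or_eq_one (μ := μ) hm hX.aestronglyMeasurable hval
  have hPhalf : StronglyMeasurable[m] fun ω => P ω / 2 :=
    (stronglyMeasurable_condExp.measurable.div_const 2).stronglyMeasurable
  have hPm : StronglyMeasurable[m] fun ω => exp (P ω / 2) :=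
    continuous_exp.comp_stronglyMeasurable hPhalf
  have hsplit : (fun ω => exp (P ω / 2 - X ω)) =
      (fun ω => exp (P ω / 2)) * fun ω => exp (-X ω) := by
    funext ω; simp [sub_eq_add_neg, exp_add]
  have hint : Integrable (fun ω => exp (P ω / 2 - X ω)) μ := by
    refine integrable_exp_of_ae_le (C := 1 / 2)
      ((hPhalf.mono hm).sub hX).aestronglyMeasurable ?_
    filter_upwards [hP] with ω hPω
    have : 0 ≤ X ω := by rcases hval ω with h | h <;> simp [h]
    linarith [hPω.2]
  rw [hsplit] at hint ⊢
  have hexp_int : Integrable (fun ω => exp (-X ω)) μ :=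
    integrable_exp_of_ae_le (C := 0) hX.neg.aestronglyMeasurable <| .of_forall fun ω => by
      rcases hval ω with h | h <;> simp [h]
  filter_upwards [condExp_mul_of_stronglyMeasurable_left hPm hint hexp_int,
    condExp_exp_neg_of_eq_zero_or_eq_one hm hX.aestronglyMeasurable hval, hP] with ω hpull hbern hPω
  rw [hpull, Pi.mul_apply, hbern]
  exact exp_half_mul_one_sub_mul_le_one hPω.1

end

section

variable {Ω : Type*} {m0 : MeasurableSpace Ω} {μ : Measure Ω} [IsFiniteMeasure μ]
  {ℱ : Filtration ℕ m0}

theorem supermartingale_exp_sum_Icc {D : ℕ → Ω → ℝ} {C : ℝ} (hD : StronglyAdapted ℱ D)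
    (hbdd : ∀ t, ∀ᵐ ω ∂μ, D t ω ≤ C)
    (hmgf : ∀ n, μ[fun ω => exp (D (n + 1) ω)|ℱ n] ≤ᵐ[μ] 1) :
    Supermartingale (fun n ω => exp (∑ t ∈ Icc 1 n, D t ω)) ℱ μ := by
  set M : ℕ → Ω → ℝ := fun n ω => exp (∑ t ∈ Icc 1 n, D t ω)
  have hsum : ∀ n, StronglyMeasurable[ℱ n] fun ω => ∑ t ∈ Icc 1 n, D t ω := fun n =>
    Finset.stronglyMeasurable_fun_sum _ fun t ht => (hD t).mono (ℱ.mono (mem_Icc.1 ht).2)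
  have hadapted : StronglyAdapted ℱ M := fun n => continuous_exp.comp_stronglyMeasurable (hsum n)
  have hint : ∀ n, Integrable (M n) μ := fun n => by
    refine integrable_exp_of_ae_le (C := n * C) ((hsum n).mono (ℱ.le n)).aestronglyMeasurable ?_
    filter_upwards [ae_all_iff.2 hbdd] with ω hω
    simpa using sum_le_card_nsmul (Icc 1 n) (fun t => D t ω) C fun t _ => hω t
  have hincr_int : ∀ t, Integrable (fun ω => exp (D t ω)) μ := fun t =>
    integrable_exp_of_ae_le ((hD t).mono (ℱ.le t)).aestronglyMeasurable (hbdd t)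
  refine supermartingale_nat hadapted hint fun n => ?_
  have hstep : M (n + 1) = M n * fun ω => exp (D (n + 1) ω) := by
    funext ω
    simp [M, sum_Icc_succ_top (Nat.le_add_left 1 n), exp_add]
  rw [hstep]
  refine (condExp_mul_of_stronglyMeasurable_left (hadapted n) (hstep ▸ hint (n + 1))
    (hincr_int (n + 1))).trans_le ?_
  filter_upwards [hmgf n] with ω hω
  exact mul_le_of_le_one_right (exp_pos _).le hω

theorem supermartingale_exp_sum_half_condExp_sub {X : ℕ → Ω → ℝ} (hX : StronglyAdapted ℱ X)
    (hval : ∀ i ω, X i ω = 0 ∨ X i ω = 1) :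
    Supermartingale
      (fun n ω => exp (∑ t ∈ Icc 1 n, ((μ[X t|ℱ (t - 1)]) ω / 2 - X t ω))) ℱ μ := by
  refine supermartingale_exp_sum_Icc (C := 1 / 2) (fun t => ?_) (fun t => ?_) (fun n => ?_)
  · exact ((stronglyMeasurable_condExp.measurable.div_const 2).stronglyMeasurable.mono
      (ℱ.mono (Nat.sub_le t 1))).sub (hX t)
  · filter_upwards [ae_condExp_mem_Icc_of_eq_zero_or_eq_one (μ := μ) (ℱ.le (t - 1))
      ((hX t).mono (ℱ.le t)).aestronglyMeasurable (hval t)] with ω hω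
    have : 0 ≤ X t ω := by rcases hval t ω with h | h <;> simp [h]
    linarith [hω.2]
  · exact condExp_exp_half_condExp_sub_le_one (ℱ.le n) ((hX (n + 1)).mono (ℱ.le _)) (hval (n + 1))

theorem MeasureTheory.Supermartingale.maximal_ineq {M : ℕ → Ω → ℝ}
    (hM : Supermartingale M ℱ μ) (hnonneg : 0 ≤ M) {ε : ℝ} (hε : 0 ≤ ε) (N : ℕ) :
    ε * μ.real {ω | ∃ n ≤ N, ε ≤ M n ω} ≤ ∫ ω, M 0 ω ∂μ := by
  set τ : Ω → WithTop ℕ := fun ω => (hittingBtwn M (Set.Ici ε) 0 N ω : ℕ)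
  have hτ : IsStoppingTime ℱ τ :=
    Adapted.isStoppingTime_hittingBtwn hM.stronglyAdapted.adapted measurableSet_Ici
  have hτN : ∀ ω, τ ω ≤ N := fun ω => WithTop.coe_le_coe.2 (hittingBtwn_le ω)
  have hstopped : ∫ ω, stoppedValue M τ ω ∂μ ≤ ∫ ω, M 0 ω ∂μ := by
    have := hM.neg.expected_stoppedValue_mono (isStoppingTime_const ℱ 0) hτ
      (fun ω => WithTop.coe_le_coe.2 (Nat.zero_le _)) hτN
    simpa [stoppedValue, integral_neg] using this
  calc ε * μ.real {ω | ∃ n ≤ N, ε ≤ M n ω}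
      ≤ ε * μ.real {ω | ε ≤ stoppedValue M τ ω} := by
        refine mul_le_mul_of_nonneg_left (measureReal_mono fun ω ⟨n, hnN, hn⟩ => ?_) hε
        exact stoppedValue_hittingBtwn_mem ⟨n, ⟨Nat.zero_le n, hnN⟩, hn⟩
    _ ≤ ∫ ω, stoppedValue M τ ω ∂μ :=
        mul_meas_ge_le_integral_of_nonneg (.of_forall fun ω => hnonneg _ ω)
          (integrable_stoppedValue ℕ hτ hM.integrable hτN) ε
    _ ≤ ∫ ω, M 0 ω ∂μ := hstopped

theorem MeasureTheory.Supermartingale.ville_ineq {M : ℕ → Ω → ℝ}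
    (hM : Supermartingale M ℱ μ) (hnonneg : 0 ≤ M) {ε : ℝ} (hε : 0 < ε) :
    μ {ω | ∃ n, ε ≤ M n ω} ≤ ENNReal.ofReal ((∫ ω, M 0 ω ∂μ) / ε) := by
  have hunion : {ω | ∃ n, ε ≤ M n ω} = ⋃ N, {ω | ∃ n ≤ N, ε ≤ M n ω} := by
    ext ω
    exact ⟨fun ⟨n, hn⟩ => Set.mem_iUnion.2 ⟨n, n, le_rfl, hn⟩,
      fun h => let ⟨_, n, _, hn⟩ := Set.mem_iUnion.1 h; ⟨n, hn⟩⟩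
  have hmono : Monotone fun N => {ω | ∃ n ≤ N, ε ≤ M n ω} :=
    fun _ _ hNN' _ ⟨n, hnN, hn⟩ => ⟨n, hnN.trans hNN', hn⟩
  rw [hunion, hmono.measure_iUnion]
  refine iSup_le fun N => ?_
  rw [ENNReal.le_ofReal_iff_toReal_le (measure_ne_top μ _)
    (div_nonneg (integral_nonneg (hnonneg 0)) hε.le), le_div_iff₀' hε]
  exact hM.maximal_ineq hnonneg hε.le N

end

theorem stmt14_general {Ω : Type*} {m0 : MeasurableSpace Ω} (μ : Measure Ω)
    [IsProbabilityMeasure μ] (ℱ : Filtration ℕ m0) (X : ℕ → Ω → ℝ)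
    (hadapted : StronglyAdapted ℱ X)
    (hval : ∀ i ω, X i ω = 0 ∨ X i ω = 1)
    (W : ℝ) :
    μ {ω | ∃ n, 1 ≤ n ∧
        ∑ t ∈ Finset.Icc 1 n, X t ω ≤
          (1/2) * ∑ t ∈ Finset.Icc 1 n, (μ[X t | ℱ (t - 1)]) ω - W}
      ≤ ENNReal.ofReal (Real.exp (-W)) := by
  set M : ℕ → Ω → ℝ := fun n ω => exp (∑ t ∈ Icc 1 n, ((μ[X t|ℱ (t - 1)]) ω / 2 - X t ω))
  have hsuper : Supermartingale M ℱ μ := supermartingale_exp_sum_half_condExp_sub hadapted hval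
  have hM0 : ∫ ω, M 0 ω ∂μ = 1 := by simp [M]
  calc μ {ω | ∃ n, 1 ≤ n ∧
        ∑ t ∈ Icc 1 n, X t ω ≤ (1/2) * ∑ t ∈ Icc 1 n, (μ[X t | ℱ (t - 1)]) ω - W}
      ≤ μ {ω | ∃ n, exp W ≤ M n ω} := by
        refine measure_mono fun ω ⟨n, _, hn⟩ => ⟨n, exp_le_exp.2 ?_⟩
        rw [sum_sub_distrib, ← sum_div]
        linarith
    _ ≤ ENNReal.ofReal ((∫ ω, M 0 ω ∂μ) / exp W) :=
        hsuper.ville_ineq (fun n ω => (exp_pos _).le) (exp_pos W)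
    _ = ENNReal.ofReal (exp (-W)) := by rw [hM0, exp_neg, one_div]

/-- Time-uniform multiplicative lower-tail bound for adapted Bernoulli sums:
if `X_i ∈ {0,1}` is adapted to `(ℱ_i)` with `P_i = P(X_i = 1 | ℱ_{i-1})`, then
`P(∃ n ≥ 1, ∑_{t≤n} X_t ≤ (1/2)∑_{t≤n} P_t − W) ≤ exp(−W)`. -/
theorem stmt14 {Ω : Type*} {m0 : MeasurableSpace Ω} (μ : Measure Ω)
    [IsProbabilityMeasure μ] (ℱ : Filtration ℕ m0) (X : ℕ → Ω → ℝ)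
    (hadapted : StronglyAdapted ℱ X)
    (hval : ∀ i ω, X i ω = 0 ∨ X i ω = 1)
    (W : ℝ) (hW : 0 < W) :
    μ {ω | ∃ n, 1 ≤ n ∧
        ∑ t ∈ Finset.Icc 1 n, X t ω ≤
          (1/2) * ∑ t ∈ Finset.Icc 1 n, (μ[X t | ℱ (t - 1)]) ω - W}
      ≤ ENNReal.ofReal (Real.exp (-W)) :=
  stmt14_general μ ℱ X hadapted hval W
end
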